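/- Let K₀ = {0} ∪ { 1/n : n ∈ ℕ, n ≥ 1 } ⊆ ℝ with the subspace topology, and let βℕ be the Stone–Čech compactification of the discrete space ℕ. Then the product βℕ × K₀ is not a sick compactum. -/

import Mathlib

open MeasureTheory Topology Filter Set

/-- The ordered-scalar-multiplication class of the older Mathlib (since removed). -/
class OrderedSMul (R M : Type*) [Semiring R] [PartialOrder R] [AddCommMonoid M] [PartialOrder M]
    [SMulWithZero R M] : Prop where
  protected smul_lt_smul_of_pos : ∀ {a b : M}, ∀ {c : R}, a < b → 0 < c → c • a < c • b
  protected lt_of_smul_lt_smul_of_pos : ∀ {a b : M}, ∀ {c : R}, c • a < c • b → 0 < c → a < b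

/-- A compact Hausdorff space `K` is *sick* if there are a separable Banach lattice `E`,
a positive `u : E`, and an injective linear lattice homomorphism `T : C(K, ℝ) → E` with
`T 1 = u` whose range is the principal ideal generated by `u`. -/
def IsSick (K : Type*) [TopologicalSpace K] : Prop :=
  ∃ (E : Type) (_ : NormedAddCommGroup E) (_ : Lattice E) (_ : IsOrderedAddMonoid E)
    (_ : HasSolidNorm E) (_ : NormedSpace ℝ E) (_ : OrderedSMul ℝ E)
    (_ : CompleteSpace E) (_ : TopologicalSpace.SeparableSpace E)
    (u : E) (T : C(K, ℝ) →ₗ[ℝ] E),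
    0 ≤ u ∧ Function.Injective T ∧
      (∀ f g : C(K, ℝ), T (f ⊔ g) = T f ⊔ T g) ∧
      T 1 = u ∧
      Set.range T = {y : E | ∃ r : ℝ, 0 < r ∧ |y| ≤ r • u}

noncomputable section SickAux

/-- The convergent-sequence set. -/
abbrev SickK0 : Set ℝ := {0} ∪ {x : ℝ | ∃ n : ℕ, 0 < n ∧ x = 1 / (n : ℝ)}

lemma mem_SickK0_iff (x : ℝ) (hx : x ∈ SickK0) :
    x = 0 ∨ ∃ m : ℕ, x = 1 / ((m : ℝ) + 1) := by
  rcases hx with h | ⟨n, hn, rfl⟩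
  · exact Or.inl h
  · right
    refine ⟨n - 1, ?_⟩
    have : ((n - 1 : ℕ) : ℝ) + 1 = (n : ℝ) := by
      have : n - 1 + 1 = n := Nat.succ_pred_eq_of_pos hn
      exact_mod_cast congrArg (fun k : ℕ => (k : ℝ)) this
    rw [this]

/-- Bump function on ℝ which is `1` at `1/(n+1)` and vanishes at the other points of `SickK0`. -/
def bump (n : ℕ) (t : ℝ) : ℝ :=
  max 0 (1 - (2 * ((n : ℝ) + 1) * ((n : ℝ) + 2)) * |t - 1 / ((n : ℝ) + 1)|)

lemma bump_continuous (n : ℕ) : Continuous (bump n) := by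
  unfold bump; fun_prop

lemma bump_nonneg (n : ℕ) (t : ℝ) : 0 ≤ bump n t := le_max_left _ _

lemma bump_le_one (n : ℕ) (t : ℝ) : bump n t ≤ 1 := by
  have : (0:ℝ) ≤ (2 * ((n : ℝ) + 1) * ((n : ℝ) + 2)) * |t - 1 / ((n : ℝ) + 1)| := by positivity
  have h1 : 1 - (2 * ((n : ℝ) + 1) * ((n : ℝ) + 2)) * |t - 1 / ((n : ℝ) + 1)| ≤ 1 := by linarith
  exact max_le zero_le_one h1

lemma bump_self (n : ℕ) : bump n (1 / ((n : ℝ) + 1)) = 1 := by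
  simp [bump]

lemma bump_eq_zero_of_far (n : ℕ) (t : ℝ)
    (h : 1 / (2 * ((n : ℝ) + 1) * ((n : ℝ) + 2)) ≤ |t - 1 / ((n : ℝ) + 1)|) :
    bump n t = 0 := by
  have hc : (0:ℝ) < 2 * ((n : ℝ) + 1) * ((n : ℝ) + 2) := by positivity
  have : (1:ℝ) ≤ (2 * ((n : ℝ) + 1) * ((n : ℝ) + 2)) * |t - 1 / ((n : ℝ) + 1)| := by
    calc (1:ℝ) = (2 * ((n : ℝ) + 1) * ((n : ℝ) + 2)) * (1 / (2 * ((n : ℝ) + 1) * ((n : ℝ) + 2))) := by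
          field_simp
      _ ≤ _ := by
          apply mul_le_mul_of_nonneg_left h (le_of_lt hc)
  have h1 : 1 - (2 * ((n : ℝ) + 1) * ((n : ℝ) + 2)) * |t - 1 / ((n : ℝ) + 1)| ≤ 0 := by linarith
  exact max_eq_left h1

lemma bump_zero (n : ℕ) : bump n 0 = 0 := by
  apply bump_eq_zero_of_far
  have hn : (0:ℝ) < (n : ℝ) + 1 := by positivity
  rw [zero_sub, abs_neg, abs_of_nonneg (by positivity)]
  rw [div_le_div_iff₀ (by positivity) (by positivity)]
  nlinarith [Nat.cast_nonneg (α := ℝ) n]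

lemma bump_ne (n m : ℕ) (h : m ≠ n) : bump n (1 / ((m : ℝ) + 1)) = 0 := by
  apply bump_eq_zero_of_far
  have hm : (0:ℝ) < (m : ℝ) + 1 := by positivity
  have hn : (0:ℝ) < (n : ℝ) + 1 := by positivity
  have hm0 : (0:ℝ) ≤ (m : ℝ) := Nat.cast_nonneg m
  have hn0 : (0:ℝ) ≤ (n : ℝ) := Nat.cast_nonneg n
  rcases lt_or_gt_of_ne h with hlt | hgt
  · -- m < n, so 1/(m+1) > 1/(n+1)
    have hmn : (m : ℝ) + 1 ≤ (n : ℝ) := by exact_mod_cast hlt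
    have hle : 1 / ((n : ℝ) + 1) ≤ 1 / ((m : ℝ) + 1) :=
      one_div_le_one_div_of_le hm (by linarith)
    rw [abs_of_nonneg (by linarith)]
    rw [div_sub_div _ _ (ne_of_gt hm) (ne_of_gt hn), div_le_div_iff₀ (by positivity) (by positivity)]
    nlinarith [mul_nonneg hm0 hn0, mul_nonneg hn0 hn0, mul_nonneg hm0 hm0]
  · -- n < m
    have hmn : (n : ℝ) + 1 ≤ (m : ℝ) := by exact_mod_cast hgt
    have hle : 1 / ((m : ℝ) + 1) ≤ 1 / ((n : ℝ) + 1) :=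
      one_div_le_one_div_of_le hn (by linarith)
    rw [abs_of_nonpos (by linarith), neg_sub]
    rw [div_sub_div _ _ (ne_of_gt hn) (ne_of_gt hm), div_le_div_iff₀ (by positivity) (by positivity)]
    nlinarith [mul_nonneg hm0 hn0, mul_nonneg hn0 hn0, mul_nonneg hm0 hm0,
      mul_nonneg (mul_nonneg hm0 hn0) hn0, mul_nonneg (mul_nonneg hn0 hn0) hn0]

open scoped Classical

/-- Indicator (extended to `βℕ`) of the set of codes `Nat.pair n j` with `j ∈ S`. -/
def bchi (n : ℕ) (S : Set ℕ) : StoneCech ℕ → ℝ := fun x =>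
  if stoneCechExtend (continuous_of_discreteTopology
      (f := fun k : ℕ => decide ((Nat.unpair k).1 = n ∧ (Nat.unpair k).2 ∈ S))) x then 1 else 0

lemma bchi_continuous (n : ℕ) (S : Set ℕ) : Continuous (bchi n S) := by
  unfold bchi
  exact (continuous_of_discreteTopology (f := fun b : Bool => if b then (1:ℝ) else 0)).comp
    (continuous_stoneCechExtend _)

lemma bchi_unit (n : ℕ) (S : Set ℕ) (k : ℕ) :
    bchi n S (stoneCechUnit k) =
      if (Nat.unpair k).1 = n ∧ (Nat.unpair k).2 ∈ S then 1 else 0 := by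
  unfold bchi
  have hk := congrFun (stoneCechExtend_extends (continuous_of_discreteTopology
      (f := fun k : ℕ => decide ((Nat.unpair k).1 = n ∧ (Nat.unpair k).2 ∈ S)))) k
  simp only [Function.comp_apply] at hk
  rw [hk]
  by_cases h : (Nat.unpair k).1 = n ∧ (Nat.unpair k).2 ∈ S <;> simp [h]

lemma bchi_mem (n : ℕ) (S : Set ℕ) (x : StoneCech ℕ) : bchi n S x = 0 ∨ bchi n S x = 1 := by
  unfold bchi; split_ifs <;> simp

lemma bchi_nonneg (n : ℕ) (S : Set ℕ) (x : StoneCech ℕ) : 0 ≤ bchi n S x := by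
  rcases bchi_mem n S x with h | h <;> rw [h] <;> norm_num

lemma bchi_le_one (n : ℕ) (S : Set ℕ) (x : StoneCech ℕ) : bchi n S x ≤ 1 := by
  rcases bchi_mem n S x with h | h <;> rw [h] <;> norm_num

/-- The ambient compact space. -/
abbrev SickK : Type := StoneCech ℕ × ↥SickK0

/-- The point `1/(n+1)` of `SickK0`. -/
def tK (n : ℕ) : ↥SickK0 :=
  ⟨1 / ((n : ℝ) + 1), Or.inr ⟨n + 1, Nat.succ_pos n, by push_cast; ring⟩⟩

/-- The point `0` of `SickK0`. -/
def t0 : ↥SickK0 := ⟨0, Or.inl rfl⟩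

lemma tendsto_tK : Tendsto tK atTop (𝓝 t0) := by
  apply tendsto_subtype_rng.mpr
  exact tendsto_one_div_add_atTop_nhds_zero_nat

/-- `hmap n S` : on the level `βℕ × {1/(n+1)}` it is the indicator `bchi n S`, elsewhere `0`. -/
def hmap (n : ℕ) (S : Set ℕ) : C(SickK, ℝ) :=
  ⟨fun p => bchi n S p.1 * bump n p.2.val,
    ((bchi_continuous n S).comp continuous_fst).mul
      ((bump_continuous n).comp (continuous_subtype_val.comp continuous_snd))⟩

/-- `dmap n` : indicator of the level `βℕ × {1/(n+1)}`. -/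
def dmap (n : ℕ) : C(SickK, ℝ) :=
  ⟨fun p => bump n p.2.val,
    (bump_continuous n).comp (continuous_subtype_val.comp continuous_snd)⟩

lemma bump_val_cases (n : ℕ) (t : ↥SickK0) :
    bump n t.val = 0 ∨ (∃ m : ℕ, t = tK m ∧ bump n t.val = if m = n then 1 else 0) := by
  rcases mem_SickK0_iff t.val t.property with h | ⟨m, hm⟩
  · left; rw [h]; exact bump_zero n
  · right
    refine ⟨m, Subtype.ext hm, ?_⟩
    rw [hm]
    by_cases hmn : m = n
    · subst hmn; rw [if_pos rfl]; exact bump_self m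
    · rw [if_neg hmn]; exact bump_ne n m hmn

lemma dmap_nonneg (n : ℕ) : (0 : C(SickK, ℝ)) ≤ dmap n := by
  rw [ContinuousMap.le_def]
  intro p; exact bump_nonneg n p.2.val

lemma dmap_inf (n m : ℕ) (h : n ≠ m) : dmap n ⊓ dmap m = 0 := by
  ext p
  have h1 : bump n p.2.val = 0 ∨ bump m p.2.val = 0 := by
    rcases bump_val_cases n p.2 with h1 | ⟨j, hj, h1⟩
    · exact Or.inl h1
    · rcases bump_val_cases m p.2 with h2 | ⟨j', hj', h2⟩
      · exact Or.inr h2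
      · have : j' = j := by
          have := hj ▸ hj'
          have := congrArg (fun t : ↥SickK0 => t.val) this
          simp only [tK] at this
          have hj0 : ((j : ℝ) + 1) ≠ 0 := by positivity
          have hj'0 : ((j' : ℝ) + 1) ≠ 0 := by positivity
          field_simp at this
          exact_mod_cast (by linarith : (j' : ℝ) = (j : ℝ))
        subst this
        by_cases hjn : j' = n
        · right; rw [h2, if_neg]; omega
        · left; rw [h1, if_neg hjn]
  simp only [ContinuousMap.inf_apply, ContinuousMap.zero_apply, dmap, ContinuousMap.coe_mk]
  rcases h1 with h1 | h1
  · rw [h1]; exact min_eq_left (bump_nonneg m p.2.val)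
  · rw [h1]; exact min_eq_right (bump_nonneg n p.2.val)

lemma sum_dmap_le_one (F : Finset ℕ) : (∑ n ∈ F, dmap n) ≤ (1 : C(SickK, ℝ)) := by
  rw [ContinuousMap.le_def]
  intro p
  have hsum : (∑ n ∈ F, dmap n) p = ∑ n ∈ F, bump n p.2.val := by
    rw [ContinuousMap.coe_sum, Finset.sum_apply]; rfl
  rw [hsum]
  show ∑ n ∈ F, bump n p.2.val ≤ (1 : C(SickK, ℝ)) p
  have h1 : (1 : C(SickK, ℝ)) p = 1 := rfl
  rw [h1]
  rcases mem_SickK0_iff p.2.val p.2.property with h | ⟨m, hm⟩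
  · have : ∀ n ∈ F, bump n p.2.val = 0 := fun n _ => by rw [h]; exact bump_zero n
    rw [Finset.sum_congr rfl this]
    simp
  · calc ∑ n ∈ F, bump n p.2.val ≤ ∑ n ∈ F, (if n = m then (1:ℝ) else 0) := by
          apply Finset.sum_le_sum
          intro n _
          by_cases hnm : n = m
          · subst hnm; rw [if_pos rfl]; exact bump_le_one n _
          · rw [if_neg hnm, hm, bump_ne n m (fun hh => hnm hh.symm)]
      _ ≤ 1 := by
          rw [Finset.sum_ite_eq' F m (fun _ => (1:ℝ))]
          split_ifs <;> norm_num

lemma abs_hmap_sub_le (n : ℕ) (S S' : Set ℕ) : |hmap n S - hmap n S'| ≤ dmap n := by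
  rw [ContinuousMap.le_def]
  intro p
  have h1 : |hmap n S - hmap n S'| p = |bchi n S p.1 * bump n p.2.val - bchi n S' p.1 * bump n p.2.val| := by
    simp [hmap]; rfl
  rw [h1]
  show _ ≤ bump n p.2.val
  rw [← sub_mul, abs_mul, abs_of_nonneg (bump_nonneg n p.2.val)]
  have h2 : |bchi n S p.1 - bchi n S' p.1| ≤ 1 := by
    rw [abs_sub_le_iff]
    constructor <;> [skip; skip] <;>
      · have := bchi_le_one n S p.1
        have := bchi_le_one n S' p.1
        have := bchi_nonneg n S p.1
        have := bchi_nonneg n S' p.1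
        linarith
  nlinarith [bump_nonneg n p.2.val, abs_nonneg (bchi n S p.1 - bchi n S' p.1)]

section LatticeAux

variable {E : Type} [NormedAddCommGroup E] [Lattice E] [IsOrderedAddMonoid E]

lemma aux_inf_add {a b z : E} (ha : 0 ≤ a) (hb : 0 ≤ b) (hz : 0 ≤ z)
    (h1 : a ⊓ z = 0) (h2 : b ⊓ z = 0) : (a + b) ⊓ z = 0 := by
  refine le_antisymm ?_ (le_inf (add_nonneg ha hb) hz)
  have h3 : (a + b) ⊓ z - b ≤ a := sub_le_iff_le_add.2 (inf_le_left.trans (by rw [add_comm]))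
  have h4 : (a + b) ⊓ z - b ≤ z := (sub_le_self _ hb).trans inf_le_right
  have h5 : (a + b) ⊓ z - b ≤ 0 := h1 ▸ le_inf h3 h4
  have h6 : (a + b) ⊓ z ≤ b := sub_nonpos.1 h5
  exact h2 ▸ le_inf h6 inf_le_right

lemma aux_sum_inf (v : ℕ → E) (z : E) (hv : ∀ n, 0 ≤ v n) (hz : 0 ≤ z)
    (h : ∀ n, v n ⊓ z = 0) (F : Finset ℕ) : (∑ n ∈ F, v n) ⊓ z = 0 := by
  classical
  induction F using Finset.induction_on with
  | empty => simpa using inf_eq_left.mpr hz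
  | @insert a F ha ih =>
      rw [Finset.sum_insert ha]
      exact aux_inf_add (hv a) (Finset.sum_nonneg fun n _ => hv n) hz (h a) ih

lemma aux_abs_sum (w : ℕ → E) (F : Finset ℕ) : |∑ n ∈ F, w n| ≤ ∑ n ∈ F, |w n| := by
  classical
  induction F using Finset.induction_on with
  | empty => simp
  | @insert a F ha ih =>
      rw [Finset.sum_insert ha, Finset.sum_insert ha]
      exact (abs_add_le _ _).trans (add_le_add le_rfl ih)

end LatticeAux

/-- In a separable metric group, among continuum many points two are `ε`-close. -/
lemma exists_close {E : Type} [NormedAddCommGroup E] [TopologicalSpace.SeparableSpace E]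
    (x : Set ℕ → E) {ε : ℝ} (hε : 0 < ε) : ∃ S S' : Set ℕ, S ≠ S' ∧ ‖x S - x S'‖ < ε := by
  obtain ⟨D, hDc, hDd⟩ := TopologicalSpace.exists_countable_dense E
  have hc : ∀ S : Set ℕ, ∃ d, d ∈ D ∧ dist (x S) d < ε / 2 := fun S =>
    Metric.mem_closure_iff.mp (hDd (x S)) (ε / 2) (by linarith)
  choose φ hφD hφ using hc
  have hni : ¬ Function.Injective φ := by
    intro hinj
    have : Countable (Set ℕ) := by
      haveI := hDc.to_subtype
      have hinj2 : Function.Injective (fun S => (⟨φ S, hφD S⟩ : D)) := fun a b h =>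
        hinj (congrArg Subtype.val h)
      exact Function.Injective.countable hinj2
    obtain ⟨f, hf⟩ := exists_injective_nat (Set ℕ)
    exact Function.cantor_injective f hf
  rw [Function.not_injective_iff] at hni
  obtain ⟨S, S', heq, hne⟩ := hni
  refine ⟨S, S', hne, ?_⟩
  have h1 := dist_triangle (x S) (φ S) (x S')
  have h2 : dist (φ S) (x S') = dist (x S') (φ S') := by rw [heq, dist_comm]
  rw [← dist_eq_norm]
  calc dist (x S) (x S') ≤ dist (x S) (φ S) + dist (φ S) (x S') := h1
    _ < ε / 2 + ε / 2 := by rw [h2]; exact add_lt_add (hφ S) (hφ S')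
    _ = ε := by ring

end SickAux

/-- The product of `βℕ` with the convergent sequence `{0} ∪ {1/n : n ≥ 1}` is not a sick
compactum. -/
theorem stmt_18 :
    ¬ IsSick (StoneCech ℕ ×
        ↥(({0} ∪ {x : ℝ | ∃ n : ℕ, 0 < n ∧ x = 1 / (n : ℝ)}) : Set ℝ)) := by
  intro h
  obtain ⟨E, i1, i2, i3, i4, i5, i6, i7, i8, u, T', hu, hinj, hsup, hT1, hrange⟩ := h
  letI := i1; letI := i2; letI := i3; letI := i4; letI := i5; letI := i6; letI := i7; letI := i8
  classical
  set T : C(SickK, ℝ) →ₗ[ℝ] E := T' with hT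
  -- basic properties of `T`
  have Tpos : ∀ f : C(SickK, ℝ), 0 ≤ f → 0 ≤ T f := by
    intro f hf
    have h := hsup f 0
    rw [sup_eq_left.mpr hf, map_zero] at h
    calc (0:E) ≤ T f ⊔ 0 := le_sup_right
      _ = T f := h.symm
  have Tmono : ∀ f g : C(SickK, ℝ), f ≤ g → T f ≤ T g := by
    intro f g hfg
    have h := Tpos (g - f) (by rwa [sub_nonneg])
    rw [map_sub] at h
    exact sub_nonneg.mp h
  have Tinf : ∀ f g : C(SickK, ℝ), T (f ⊓ g) = T f ⊓ T g := by
    intro f g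
    have h1 : f ⊓ g = -(-f ⊔ -g) := by rw [neg_sup, neg_neg, neg_neg]
    rw [h1, map_neg, hsup, map_neg, map_neg, neg_sup, neg_neg, neg_neg]
  have Tabs : ∀ f : C(SickK, ℝ), T |f| = |T f| := by
    intro f
    have h1 : |f| = f ⊔ -f := rfl
    have h2 : |T f| = T f ⊔ -(T f) := rfl
    rw [h1, h2, hsup, map_neg]
  -- pigeonhole at each level
  have hpig : ∀ n : ℕ, ∃ S S' : Set ℕ, S ≠ S' ∧
      ‖T (hmap n S) - T (hmap n S')‖ < (1/2 : ℝ)^n := fun n =>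
    exists_close (fun S => T (hmap n S)) (by positivity)
  choose S S' hSne hSdist using hpig
  have hjex : ∀ n, ∃ j, (j ∈ S n ∧ j ∉ S' n) ∨ (j ∉ S n ∧ j ∈ S' n) := by
    intro n
    by_contra hcon
    push_neg at hcon
    apply hSne n
    ext j
    have := hcon j
    tauto
  choose j hjspec using hjex
  set c : ℕ → C(SickK, ℝ) := fun n => hmap n (S n) - hmap n (S' n) with hc
  set w : ℕ → E := fun n => T (c n) with hwdef
  have hwnorm : ∀ n, ‖w n‖ ≤ (1/2 : ℝ)^n := by
    intro n
    have h1 : w n = T (hmap n (S n)) - T (hmap n (S' n)) := map_sub T _ _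
    rw [h1]
    exact (hSdist n).le
  have hsumw : Summable w := Summable.of_norm_bounded summable_geometric_two hwnorm
  set y : E := ∑' n, w n with hy
  have habs_c : ∀ n, |c n| ≤ dmap n := fun n => abs_hmap_sub_le n (S n) (S' n)
  set z : ℕ → E := fun n => T (dmap n) with hz
  have hznn : ∀ n, 0 ≤ z n := fun n => Tpos _ (dmap_nonneg n)
  have habsw_le : ∀ n, |w n| ≤ z n := by
    intro n
    have h1 : |w n| = T |c n| := (Tabs (c n)).symm
    rw [h1]
    exact Tmono _ _ (habs_c n)
  have hzinf : ∀ n m, n ≠ m → z n ⊓ z m = 0 := by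
    intro n m hnm
    show T (dmap n) ⊓ T (dmap m) = 0
    rw [← Tinf, dmap_inf n m hnm, map_zero]
  -- `|y| ≤ u`
  have habs_partial : ∀ F : Finset ℕ, |∑ n ∈ F, w n| ≤ u := by
    intro F
    calc |∑ n ∈ F, w n| ≤ ∑ n ∈ F, |w n| := aux_abs_sum w F
      _ ≤ ∑ n ∈ F, z n := Finset.sum_le_sum (fun n _ => habsw_le n)
      _ = T (∑ n ∈ F, dmap n) := (map_sum T _ F).symm
      _ ≤ T 1 := Tmono _ _ (sum_dmap_le_one F)
      _ = u := hT1
  have hyabs : |y| ≤ u := by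
    have hts : Tendsto (fun F : Finset ℕ => ∑ n ∈ F, w n) atTop (𝓝 y) := hsumw.hasSum
    have htabs : Tendsto (fun F : Finset ℕ => |∑ n ∈ F, w n|) atTop (𝓝 |y|) :=
      hts.sup_nhds hts.neg
    exact le_of_tendsto htabs (Eventually.of_forall habs_partial)
  have hymem : y ∈ Set.range T := by
    rw [hT, hrange]
    exact ⟨1, one_pos, by rwa [one_smul]⟩
  obtain ⟨f, hfy⟩ := hymem
  -- per-level identification of `f`
  have key : ∀ n, |f - c n| ⊓ dmap n = 0 := by
    intro n
    set w' : ℕ → E := fun m => if m = n then 0 else w m with hw'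
    have hw'norm : ∀ m, ‖w' m‖ ≤ (1/2 : ℝ)^m := by
      intro m
      show ‖if m = n then (0:E) else w m‖ ≤ _
      split_ifs with hmn
      · rw [norm_zero]; positivity
      · exact hwnorm m
    have hsumw' : Summable w' := Summable.of_norm_bounded summable_geometric_two hw'norm
    have hrem : ∑' m, w' m = y - w n := by
      have h1 := Summable.tsum_eq_add_tsum_ite hsumw n
      calc ∑' m, w' m = (w n + ∑' m, (if m = n then 0 else w m)) - w n := by
            rw [add_sub_cancel_left]
        _ = (∑' m, w m) - w n := by rw [← h1]
        _ = y - w n := rfl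
    have hdisj : ∀ m, |w' m| ⊓ z n = 0 := by
      intro m
      by_cases hmn : m = n
      · have h1 : w' m = 0 := by rw [hw']; simp [hmn]
        rw [h1, abs_zero]
        exact inf_eq_left.mpr (hznn n)
      · have h0 : |w' m| ≤ z m := by
          have : w' m = w m := by rw [hw']; simp [hmn]
          rw [this]; exact habsw_le m
        have h1 : |w' m| ⊓ z n ≤ z m ⊓ z n := inf_le_inf_right _ h0
        exact le_antisymm (h1.trans (hzinf m n hmn).le) (le_inf (abs_nonneg _) (hznn n))
    have hFin : ∀ F : Finset ℕ, |∑ m ∈ F, w' m| ⊓ z n = 0 := by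
      intro F
      have h1 : |∑ m ∈ F, w' m| ≤ ∑ m ∈ F, |w' m| := aux_abs_sum w' F
      have h2 : (∑ m ∈ F, |w' m|) ⊓ z n = 0 :=
        aux_sum_inf _ _ (fun m => abs_nonneg _) (hznn n) hdisj F
      exact le_antisymm ((inf_le_inf_right _ h1).trans h2.le)
        (le_inf (abs_nonneg _) (hznn n))
    have hts : Tendsto (fun F : Finset ℕ => ∑ m ∈ F, w' m) atTop (𝓝 (y - w n)) :=
      hrem ▸ hsumw'.hasSum
    have htabs : Tendsto (fun F : Finset ℕ => |∑ m ∈ F, w' m| ⊓ z n) atTop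
        (𝓝 (|y - w n| ⊓ z n)) :=
      (hts.sup_nhds hts.neg).inf_nhds tendsto_const_nhds
    have hlim : |y - w n| ⊓ z n = 0 := by
      have h0 : Tendsto (fun F : Finset ℕ => |∑ m ∈ F, w' m| ⊓ z n) atTop (𝓝 0) := by
        rw [show (fun F : Finset ℕ => |∑ m ∈ F, w' m| ⊓ z n) = fun _ => (0:E) from funext hFin]
        exact tendsto_const_nhds
      exact tendsto_nhds_unique htabs h0
    have hTf : T (|f - c n| ⊓ dmap n) = 0 := by
      rw [Tinf, Tabs, map_sub, hfy]
      exact hlim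
    exact hinj (by rw [hTf, map_zero] : T (|f - c n| ⊓ dmap n) = T 0)
  -- pointwise consequences
  have heval : ∀ n (x : StoneCech ℕ), f (x, tK n) = c n (x, tK n) := by
    intro n x
    have h0 := DFunLike.congr_fun (key n) ((x, tK n) : SickK)
    have h1 : (|f - c n| ⊓ dmap n) ((x, tK n) : SickK) =
        |f (x, tK n) - c n (x, tK n)| ⊓ (dmap n (x, tK n)) := by simp; rfl
    have h2 : dmap n ((x, tK n) : SickK) = 1 := bump_self n
    rw [h1, h2] at h0
    have h3 : |f (x, tK n) - c n (x, tK n)| = 0 := by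
      rcases le_total |f (x, tK n) - c n (x, tK n)| 1 with hle | hle
      · rw [inf_eq_left.mpr hle] at h0; exact h0
      · rw [inf_eq_right.mpr hle] at h0; norm_num at h0
    exact sub_eq_zero.mp (abs_eq_zero.mp h3)
  have hcval : ∀ n m k, c n ((stoneCechUnit k, tK m) : SickK) =
      ((if (Nat.unpair k).1 = n ∧ (Nat.unpair k).2 ∈ S n then (1:ℝ) else 0) -
       (if (Nat.unpair k).1 = n ∧ (Nat.unpair k).2 ∈ S' n then (1:ℝ) else 0)) *
        bump n (tK m).val := by
    intro n m k
    show (hmap n (S n) - hmap n (S' n)) ((stoneCechUnit k, tK m) : SickK) = _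
    simp only [ContinuousMap.sub_apply, hmap, ContinuousMap.coe_mk, bchi_unit]
    ring
  set xn : ℕ → StoneCech ℕ := fun n => stoneCechUnit (Nat.pair n (j n)) with hxn
  have hvn : ∀ n, f ((xn n, tK n) : SickK) = 1 ∨ f ((xn n, tK n) : SickK) = -1 := by
    intro n
    rw [heval n (xn n), hcval n n (Nat.pair n (j n))]
    have hb : bump n (tK n).val = 1 := bump_self n
    rw [hb, mul_one]
    rcases hjspec n with ⟨h1, h2⟩ | ⟨h1, h2⟩
    · left; rw [if_pos (by simp [Nat.unpair_pair, h1]), if_neg (by simp [Nat.unpair_pair, h2])]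
      norm_num
    · right; rw [if_neg (by simp [Nat.unpair_pair, h1]), if_pos (by simp [Nat.unpair_pair, h2])]
      norm_num
  have hv0 : ∀ n m, n ≠ m → f ((xn n, tK m) : SickK) = 0 := by
    intro n m hnm
    rw [heval m (xn n), hcval m m (Nat.pair n (j n))]
    rw [if_neg (by simp [Nat.unpair_pair]; intro hh; exact absurd hh hnm),
      if_neg (by simp [Nat.unpair_pair]; intro hh; exact absurd hh hnm)]
    ring
  have hf0 : ∀ n, f ((xn n, t0) : SickK) = 0 := by
    intro n
    have hp : Tendsto (fun m => ((xn n, tK m) : SickK)) atTop (𝓝 ((xn n, t0) : SickK)) :=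
      tendsto_const_nhds.prodMk_nhds tendsto_tK
    have h1 : Tendsto (fun m => f ((xn n, tK m) : SickK)) atTop (𝓝 (f ((xn n, t0) : SickK))) :=
      (f.continuous.continuousAt.tendsto).comp hp
    have h2 : Tendsto (fun m => f ((xn n, tK m) : SickK)) atTop (𝓝 0) := by
      apply Tendsto.congr' _ tendsto_const_nhds
      filter_upwards [eventually_ge_atTop (n+1)] with m hm
      exact (hv0 n m (by omega)).symm
    exact tendsto_nhds_unique h1 h2
  -- cluster point argument
  obtain ⟨xs, hxs⟩ := exists_clusterPt_of_compactSpace (Filter.map xn atTop)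
  have hxs' : MapClusterPt xs atTop xn := hxs
  have hcl1 : MapClusterPt ((xs, t0) : SickK) atTop (fun n => ((xn n, tK n) : SickK)) := by
    rw [mapClusterPt_iff_frequently]
    intro s hs
    rw [nhds_prod_eq] at hs
    obtain ⟨U, hU, V, hV, hUV⟩ := Filter.mem_prod_iff.mp hs
    have h1 : ∃ᶠ n in atTop, xn n ∈ U := (mapClusterPt_iff_frequently.mp hxs') U hU
    have h2 : ∀ᶠ n in atTop, tK n ∈ V := tendsto_tK hV
    exact (h1.and_eventually h2).mono (fun n hn => hUV (Set.mk_mem_prod hn.1 hn.2))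
  have hcl2 : MapClusterPt ((xs, t0) : SickK) atTop (fun n => ((xn n, t0) : SickK)) := by
    rw [mapClusterPt_iff_frequently]
    intro s hs
    rw [nhds_prod_eq] at hs
    obtain ⟨U, hU, V, hV, hUV⟩ := Filter.mem_prod_iff.mp hs
    have h1 : ∃ᶠ n in atTop, xn n ∈ U := (mapClusterPt_iff_frequently.mp hxs') U hU
    exact h1.mono (fun n hn => hUV (Set.mk_mem_prod hn (mem_of_mem_nhds hV)))
  have hA : MapClusterPt (f ((xs, t0) : SickK)) atTop
      (fun n => f ((xn n, tK n) : SickK)) := by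
    have := hcl1.map f.continuous.continuousAt (Filter.map_map).le
    exact this
  have hB : MapClusterPt (f ((xs, t0) : SickK)) atTop
      (fun n => f ((xn n, t0) : SickK)) := by
    have := hcl2.map f.continuous.continuousAt (Filter.map_map).le
    exact this
  have hA1 : f ((xs, t0) : SickK) ∈ ({-1, 1} : Set ℝ) := by
    have hle : Filter.map (fun n => f ((xn n, tK n) : SickK)) atTop ≤ 𝓟 ({-1, 1} : Set ℝ) := by
      rw [le_principal_iff, Filter.mem_map]
      apply Eventually.of_forall
      intro n
      rcases hvn n with h | h
      exacts [Or.inr h, Or.inl h]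
    have h5 : ClusterPt (f ((xs, t0) : SickK)) (𝓟 ({-1, 1} : Set ℝ)) := ClusterPt.mono hA hle
    have h6 := mem_closure_iff_clusterPt.mpr h5
    rwa [IsClosed.closure_eq (by
      have : ({-1, 1} : Set ℝ).Finite := (Set.finite_singleton 1).insert (-1)
      exact this.isClosed)] at h6
  have hB1 : f ((xs, t0) : SickK) ∈ ({0} : Set ℝ) := by
    have hle : Filter.map (fun n => f ((xn n, t0) : SickK)) atTop ≤ 𝓟 ({0} : Set ℝ) := by
      rw [le_principal_iff, Filter.mem_map]
      apply Eventually.of_forall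
      intro n
      exact hf0 n
    have h5 : ClusterPt (f ((xs, t0) : SickK)) (𝓟 ({0} : Set ℝ)) := ClusterPt.mono hB hle
    have h6 := mem_closure_iff_clusterPt.mpr h5
    rwa [IsClosed.closure_eq isClosed_singleton] at h6
  rw [Set.mem_singleton_iff] at hB1
  rw [hB1] at hA1
  norm_num at hA1
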